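/- arXiv:1910.10867 — 2 statements merged into one kernel-verified Lean document; each statement's English description precedes it below -/
import Mathlib

section
/- Assume B ≠ 0 and let ℛ be the reachable subspace of (A,B). Let h := min{ℓ ≥ 1 : Σ_{k=0}^{ℓ−1} A^k(range B) = ℛ}. Then the set 𝒯₁ := {q ∈ ℕ : ∃ F ∈ ℂ^{m×n} such that the restriction of A+BF to ℛ is diagonalizable and has exactly q distinct eigenvalues} is nonempty, and h = min 𝒯₁. -/
open Matrix Submodule

/-- The `h`-step Krylov subspace `Σ_{k=0}^{h-1} A^k (range B)`. -/
noncomputable def krylov {n m : ℕ} (A : Matrix (Fin n) (Fin n) ℂ)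
    (B : Matrix (Fin n) (Fin m) ℂ) (h : ℕ) : Submodule ℂ (Fin n → ℂ) :=
  ⨆ k ∈ Finset.range h, Submodule.map (A.mulVecLin ^ k) (LinearMap.range B.mulVecLin)

/-- The reachable subspace `ℛ`: the smallest `A`-invariant subspace containing `range B`. -/
noncomputable def reachSub {n m : ℕ} (A : Matrix (Fin n) (Fin n) ℂ)
    (B : Matrix (Fin n) (Fin m) ℂ) : Submodule ℂ (Fin n → ℂ) :=
  sInf {W : Submodule ℂ (Fin n → ℂ) |
    LinearMap.range B.mulVecLin ≤ W ∧ Submodule.map A.mulVecLin W ≤ W}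

/-- An endomorphism of a complex vector space is diagonalizable if the space
is spanned by eigenvectors, i.e. the eigenspaces span the whole space. -/
def IsDiagonalizable {M : Type*} [AddCommGroup M] [Module ℂ M]
    (f : M →ₗ[ℂ] M) : Prop :=
  (⨆ μ : ℂ, Module.End.eigenspace f μ) = ⊤

/-
Feedback `F` does not change the Krylov subspaces `K_ℓ = Σ_{k<ℓ} A^k (range B)`. If `A + BF` is
diagonalizable on `ℛ` with eigenvalue set `S`, then `∏_{μ ∈ S} (X - μ)` annihilates it, so the
Krylov sequence of `A + BF` (hence of `A`) is stationary from step `|S|` on, and `h ≤ |S|`.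

Conversely, fix distinct scalars `λ₀, …, λ_{h-1}`. Inside `ℛ`, induction on `t` shows that
`K_{s+t} = ℛ` implies `K_s + Σ_{i<t} (A - λᵢ)⁻¹ (range B) = ℛ`: both `K_{s+1}` and the preimages
for `λᵢ ≠ λ` lie in `range B + (A - λ)(…)`, and `range B + (A - λ) W ⊇ ℛ` gives
`W + (A - λ)⁻¹ (range B) = ℛ`. For `x` in the `i`-th preimage write `(λᵢ - A) x = B u`; prescribing
`F x = u` on a basis drawn from these preimages makes every basis vector an eigenvector of `A + BF`,
with at most `h` distinct eigenvalues.
-/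

open scoped Polynomial
open Module.End

section KrylovSpace

variable {K V : Type*} [CommRing K] [AddCommGroup V] [Module K V]
  (f : Module.End K V) (p : Submodule K V)

noncomputable def krylovSpace (s : ℕ) : Submodule K V :=
  ⨆ k ∈ Finset.range s, p.map (f ^ k)

@[simp]
lemma krylovSpace_zero : krylovSpace f p 0 = ⊥ := by
  simp [krylovSpace]

lemma krylovSpace_succ (s : ℕ) :
    krylovSpace f p (s + 1) = krylovSpace f p s ⊔ p.map (f ^ s) := by
  rw [krylovSpace, Finset.range_add_one, Finset.iSup_insert, sup_comm, krylovSpace]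

lemma krylovSpace_mono : Monotone (krylovSpace f p) := fun _ _ hst =>
  biSup_mono fun _ hk => Finset.range_subset_range.2 hst hk

lemma krylovSpace_succ' (s : ℕ) :
    krylovSpace f p (s + 1) = p ⊔ (krylovSpace f p s).map f := by
  induction s with
  | zero => simp [krylovSpace_succ, Module.End.one_eq_id]
  | succ s ih =>
    conv_rhs => rw [krylovSpace_succ]
    rw [krylovSpace_succ, ih, Submodule.map_sup, ← Submodule.map_comp,
      ← Module.End.mul_eq_comp, ← pow_succ', sup_assoc]

lemma map_subtype_krylovSpace_restrict {R : Submodule K V} (hR : ∀ x ∈ R, f x ∈ R) (hp : p ≤ R)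
    (s : ℕ) :
    (krylovSpace (f.restrict hR) (p.comap R.subtype) s).map R.subtype = krylovSpace f p s := by
  simp only [krylovSpace, Submodule.map_iSup]
  refine iSup_congr fun k => iSup_congr fun _ => ?_
  rw [← map_comp, pow_restrict, LinearMap.subtype_comp_restrict, LinearMap.domRestrict, map_comp,
    map_comap_subtype, inf_eq_right.2 hp]

lemma krylovSpace_le {R : Submodule K V} (hR : ∀ x ∈ R, f x ∈ R) (hp : p ≤ R) (s : ℕ) :
    krylovSpace f p s ≤ R :=
  map_subtype_krylovSpace_restrict f p hR hp s ▸ map_subtype_le _ _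

lemma map_add_le_sup_of_range_le {g : Module.End K V} (hg : LinearMap.range g ≤ p)
    (W : Submodule K V) : W.map (f + g) ≤ p ⊔ W.map f :=
  (map_add_le W f g).trans <|
    sup_comm p (W.map f) ▸ sup_le_sup_left (LinearMap.map_le_range.trans hg) _

lemma sup_map_add_of_range_le {g : Module.End K V} (hg : LinearMap.range g ≤ p)
    (W : Submodule K V) : p ⊔ W.map (f + g) = p ⊔ W.map f := by
  refine le_antisymm (sup_le le_sup_left (map_add_le_sup_of_range_le f p hg W))
    (sup_le le_sup_left ?_)
  have := map_add_le_sup_of_range_le (f + g) p (LinearMap.range_neg g ▸ hg) W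
  rwa [add_neg_cancel_right] at this

lemma krylovSpace_add_of_range_le {g : Module.End K V} (hg : LinearMap.range g ≤ p) (s : ℕ) :
    krylovSpace (f + g) p s = krylovSpace f p s := by
  induction s with
  | zero => simp
  | succ s ih => rw [krylovSpace_succ', krylovSpace_succ', ih, sup_map_add_of_range_le f p hg]

lemma map_pow_natDegree_le_krylovSpace {P : K[X]} (hP : P.Monic)
    (hfP : Polynomial.aeval f P = 0) :
    p.map (f ^ P.natDegree) ≤ krylovSpace f p P.natDegree := by
  have hpow : f ^ P.natDegree = -∑ k ∈ Finset.range P.natDegree, P.coeff k • f ^ k := by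
    rw [Polynomial.aeval_eq_sum_range, Finset.sum_range_succ, hP.coeff_natDegree, one_smul] at hfP
    exact eq_neg_of_add_eq_zero_right hfP
  rintro _ ⟨x, hx, rfl⟩
  rw [hpow, LinearMap.neg_apply, LinearMap.sum_apply]
  refine neg_mem (sum_mem fun k hk => smul_mem _ _ ?_)
  exact le_iSup₂ (f := fun k _ => p.map (f ^ k)) k hk (mem_map_of_mem hx)

lemma krylovSpace_le_of_succ_eq {s : ℕ} (hs : krylovSpace f p (s + 1) = krylovSpace f p s)
    (ℓ : ℕ) : krylovSpace f p ℓ ≤ krylovSpace f p s := by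
  have stable : ∀ j, krylovSpace f p (s + j) = krylovSpace f p s := by
    intro j
    induction j with
    | zero => rfl
    | succ j ih => rw [← add_assoc, krylovSpace_succ', ih, ← krylovSpace_succ', hs]
  exact (krylovSpace_mono f p (Nat.le_add_left ℓ s)).trans (stable ℓ).le

lemma krylovSpace_le_natDegree {P : K[X]} (hP : P.Monic) (hfP : Polynomial.aeval f P = 0)
    (ℓ : ℕ) :
    krylovSpace f p ℓ ≤ krylovSpace f p P.natDegree :=
  krylovSpace_le_of_succ_eq f p (by
    rw [krylovSpace_succ, sup_eq_left]; exact map_pow_natDegree_le_krylovSpace f p hP hfP) ℓ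

end KrylovSpace

lemma sup_comap_eq_top_of_range_le {R V V' : Type*} [Ring R] [AddCommGroup V] [Module R V]
    [AddCommGroup V'] [Module R V'] {L : V →ₗ[R] V'} {q : Submodule R V'} {W : Submodule R V}
    (h : LinearMap.range L ≤ q ⊔ W.map L) : W ⊔ q.comap L = ⊤ := by
  refine eq_top_iff.2 fun x _ => ?_
  obtain ⟨y, hy, _, ⟨w, hw, rfl⟩, hyw⟩ := mem_sup.1 (h ⟨x, rfl⟩)
  refine mem_sup.2 ⟨w, hw, x - w, ?_, add_sub_cancel w x⟩
  rwa [mem_comap, map_sub, ← hyw, add_sub_cancel_right]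

section KrylovPreimages

variable {K V : Type*} [Field K] [AddCommGroup V] [Module K V]
  (f : Module.End K V) (p : Submodule K V)

lemma map_le_map_sub_smul_one_sup (a : K) (W : Submodule K V) :
    W.map f ≤ W.map (f - a • 1) ⊔ W := by
  calc W.map f = W.map ((f - a • 1) + a • 1) := by rw [sub_add_cancel]
    _ ≤ W.map (f - a • 1) ⊔ W.map (a • 1) := map_add_le W _ _
    _ ≤ W.map (f - a • 1) ⊔ W := sup_le_sup_left (by
      rintro _ ⟨x, hx, rfl⟩
      exact W.smul_mem a hx) _

lemma krylovSpace_succ_le_sup_map_sub (a : K) (s : ℕ) :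
    krylovSpace f p (s + 1) ≤ p ⊔ (krylovSpace f p s).map (f - a • 1) := by
  induction s with
  | zero => simp [krylovSpace_succ, Module.End.one_eq_id]
  | succ s ih =>
    rw [krylovSpace_succ']
    refine sup_le le_sup_left ((map_le_map_sub_smul_one_sup f a _).trans (sup_le le_sup_right ?_))
    exact ih.trans (sup_le_sup_left (map_mono (krylovSpace_mono f p s.le_succ)) p)

lemma comap_sub_le_sup_map_sub {a c : K} (hac : a ≠ c) :
    p.comap (f - c • 1) ≤ p ⊔ (p.comap (f - c • 1)).map (f - a • 1) := by
  intro v hv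
  have hv' : (f - c • 1) v ∈ p := hv
  have : v = (c - a)⁻¹ • ((f - a • 1) v - (f - c • 1) v) := by
    rw [LinearMap.sub_apply, LinearMap.sub_apply, sub_sub_sub_cancel_left, LinearMap.smul_apply,
      LinearMap.smul_apply, Module.End.one_apply, ← sub_smul,
      inv_smul_smul₀ (sub_ne_zero.2 hac.symm)]
  rw [this]
  exact smul_mem _ _ (sub_mem (mem_sup_right (mem_map_of_mem hv)) (mem_sup_left hv'))

lemma krylovSpace_sup_iSup_comap_eq_top (Λ : Finset K) (s : ℕ)
    (h : krylovSpace f p (s + Λ.card) = ⊤) :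
    krylovSpace f p s ⊔ ⨆ a ∈ Λ, p.comap (f - a • 1) = ⊤ := by
  classical
  induction Λ using Finset.induction_on generalizing s with
  | empty => simpa using h
  | insert a Λ ha ih =>
    rw [Finset.card_insert_of_notMem ha, ← add_assoc, add_right_comm] at h
    set W := ⨆ c ∈ Λ, p.comap (f - c • 1)
    have hW : W ≤ p ⊔ W.map (f - a • 1) := iSup₂_le fun c hc =>
      (comap_sub_le_sup_map_sub f p (ne_of_mem_of_not_mem hc ha).symm).trans
        (sup_le_sup_left (map_mono (le_iSup₂ (f := fun c _ => p.comap (f - c • 1)) c hc)) p)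
    have hrange : LinearMap.range (f - a • 1) ≤ p ⊔ (krylovSpace f p s ⊔ W).map (f - a • 1) :=
      calc LinearMap.range (f - a • 1) ≤ krylovSpace f p (s + 1) ⊔ W := ih (s + 1) h ▸ le_top
        _ ≤ (p ⊔ (krylovSpace f p s).map (f - a • 1)) ⊔ (p ⊔ W.map (f - a • 1)) :=
          sup_le_sup (krylovSpace_succ_le_sup_map_sub f p a s) hW
        _ = p ⊔ (krylovSpace f p s ⊔ W).map (f - a • 1) := by
          rw [Submodule.map_sup, sup_sup_sup_comm, sup_idem]
    rw [Finset.iSup_insert, ← sup_comap_eq_top_of_range_le hrange]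
    ac_rfl

end KrylovPreimages

section Eigenspaces

variable {K V : Type*} [Field K] [AddCommGroup V] [Module K V]

lemma exists_iSup_eigenspace_add_comp_eq_top {U : Type*} [AddCommGroup U] [Module K U]
    (f : Module.End K V) (b : U →ₗ[K] V) (Λ : Finset K)
    (h : ⨆ a ∈ Λ, (LinearMap.range b).comap (f - a • 1) = ⊤) :
    ∃ g : V →ₗ[K] U, ⨆ a ∈ Λ, eigenspace (f + b ∘ₗ g) a = ⊤ := by
  set T : Set V := ⋃ a ∈ Λ, ((LinearMap.range b).comap (f - a • 1) : Set V)
  have hT : ⊤ ≤ span K T := by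
    rw [span_iUnion₂]
    simpa only [span_eq] using h.ge
  have hfeedback : ∀ x ∈ T, ∃ a ∈ Λ, ∃ u, b u = a • x - f x := by
    intro x hx
    simp only [T, Set.mem_iUnion, SetLike.mem_coe, mem_comap, LinearMap.mem_range] at hx
    obtain ⟨a, ha, u, hu⟩ := hx
    exact ⟨a, ha, -u, by simp [hu]⟩
  let e := Module.Basis.ofSpan hT
  choose a ha u hu using fun i => hfeedback (e i) (Module.Basis.ofSpan_subset hT ⟨i, rfl⟩)
  refine ⟨e.constr K u, eq_top_iff.2 ?_⟩
  rw [← e.span_eq, span_le]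
  rintro _ ⟨i, rfl⟩
  refine le_iSup₂ (f := fun a _ => eigenspace (f + b ∘ₗ e.constr K u) a) (a i) (ha i) ?_
  rw [mem_eigenspace_iff, LinearMap.add_apply, LinearMap.comp_apply, e.constr_basis, hu,
    add_sub_cancel]

lemma aeval_prod_X_sub_C_eq_zero_of_iSup_eigenspace_eq_top {f : Module.End K V} {Λ : Finset K}
    (h : ⨆ a ∈ Λ, eigenspace f a = ⊤) :
    Polynomial.aeval f (∏ a ∈ Λ, (Polynomial.X - Polynomial.C a)) = 0 := by
  refine LinearMap.ker_eq_top.1 (eq_top_iff.2 (h ▸ iSup₂_le fun a ha x hx => ?_))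
  rw [LinearMap.mem_ker, aeval_apply_of_mem_apply_eq_smul (mem_eigenspace_iff.1 hx),
    Polynomial.eval_prod, Finset.prod_eq_zero ha (by simp), zero_smul]

lemma mem_of_hasEigenvalue_of_iSup_eigenspace_eq_top {f : Module.End K V} {Λ : Finset K}
    (h : ⨆ a ∈ Λ, eigenspace f a = ⊤) {μ : K} (hμ : f.HasEigenvalue μ) : μ ∈ Λ := by
  obtain ⟨x, hx⟩ := hμ.exists_hasEigenvector
  have := aeval_apply_of_hasEigenvector (p := ∏ a ∈ Λ, (Polynomial.X - Polynomial.C a)) hx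
  rw [aeval_prod_X_sub_C_eq_zero_of_iSup_eigenspace_eq_top h, LinearMap.zero_apply, eq_comm,
    smul_eq_zero, Polynomial.eval_prod, Finset.prod_eq_zero_iff] at this
  obtain ⟨a, ha, hμa⟩ | hx0 := this
  · rw [Polynomial.eval_sub, Polynomial.eval_X, Polynomial.eval_C, sub_eq_zero] at hμa
    exact hμa ▸ ha
  · exact absurd hx0 hx.2

end Eigenspaces

lemma IsDiagonalizable.iSup_eigenspace_eq_top {M : Type*} [AddCommGroup M] [Module ℂ M]
    {f : Module.End ℂ M} (hf : IsDiagonalizable f) (hS : {μ | f.HasEigenvalue μ}.Finite) :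
    ⨆ μ ∈ hS.toFinset, eigenspace f μ = ⊤ := by
  refine eq_top_iff.2 (hf.ge.trans (iSup_le fun μ => ?_))
  by_cases hμ : f.HasEigenvalue μ
  · exact le_iSup₂ (f := fun μ _ => eigenspace f μ) μ (hS.mem_toFinset.2 hμ)
  · rw [hasEigenvalue_iff, not_not] at hμ
    exact hμ ▸ bot_le

section ControlSystem

variable {n m : ℕ} (A : Matrix (Fin n) (Fin n) ℂ) (B : Matrix (Fin n) (Fin m) ℂ)

lemma krylov_eq_krylovSpace (ℓ : ℕ) :
    krylov A B ℓ = krylovSpace A.mulVecLin (LinearMap.range B.mulVecLin) ℓ := rfl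

lemma range_mulVecLin_le_reachSub : LinearMap.range B.mulVecLin ≤ reachSub A B :=
  le_sInf fun _ hW => hW.1

lemma mulVecLin_mem_reachSub : ∀ x ∈ reachSub A B, A.mulVecLin x ∈ reachSub A B :=
  fun _ hx => mem_sInf.2 fun _ hW => hW.2 (mem_map_of_mem (mem_sInf.1 hx _ hW))

lemma add_mul_mulVecLin_mem_reachSub (F : Matrix (Fin m) (Fin n) ℂ) :
    ∀ x ∈ reachSub A B, (A + B * F).mulVecLin x ∈ reachSub A B := fun x hx => by
  rw [mulVecLin_add, mulVecLin_mul, LinearMap.add_apply, LinearMap.comp_apply]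
  exact add_mem (mulVecLin_mem_reachSub A B x hx) (range_mulVecLin_le_reachSub A B ⟨_, rfl⟩)

lemma krylov_add_mul (F : Matrix (Fin m) (Fin n) ℂ) (ℓ : ℕ) :
    krylov (A + B * F) B ℓ = krylov A B ℓ := by
  rw [krylov_eq_krylovSpace, mulVecLin_add, mulVecLin_mul]
  exact krylovSpace_add_of_range_le _ _ (LinearMap.range_comp_le_range _ _) ℓ

lemma one_le_of_krylov_eq_reachSub (hB : B ≠ 0) {q : ℕ} (hq : krylov A B q = reachSub A B) :
    1 ≤ q := by
  refine Nat.one_le_iff_ne_zero.2 fun hq0 => hB ?_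
  have hrange := range_mulVecLin_le_reachSub A B
  rw [← hq, hq0, krylov_eq_krylovSpace, krylovSpace_zero, le_bot_iff, LinearMap.range_eq_bot,
    ← Matrix.toLin'_apply'] at hrange
  exact Matrix.toLin'.injective (hrange.trans (map_zero _).symm)

lemma krylov_ncard_hasEigenvalue_eq_reachSub {h : ℕ} (hkry : krylov A B h = reachSub A B)
    (F : Matrix (Fin m) (Fin n) ℂ)
    (hinv : ∀ x ∈ reachSub A B, (A + B * F).mulVecLin x ∈ reachSub A B)
    (hdiag : IsDiagonalizable ((A + B * F).mulVecLin.restrict hinv)) :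
    krylov A B {μ | HasEigenvalue ((A + B * F).mulVecLin.restrict hinv) μ}.ncard =
      reachSub A B := by
  set M := (A + B * F).mulVecLin.restrict hinv
  have hS := finite_hasEigenvalue M
  set P := ∏ μ ∈ hS.toFinset, (Polynomial.X - Polynomial.C μ)
  have hdeg : P.natDegree = {μ | HasEigenvalue M μ}.ncard := by
    rw [Polynomial.natDegree_finsetProd_X_sub_C_eq_card, Set.ncard_eq_toFinset_card _ hS]
  have hRB := range_mulVecLin_le_reachSub A B
  have transfer := map_subtype_krylovSpace_restrict (A + B * F).mulVecLin _ hinv hRB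
  have stable := krylovSpace_le_natDegree M
    ((LinearMap.range B.mulVecLin).comap (reachSub A B).subtype)
    (Polynomial.monic_prod_of_monic _ _ fun μ _ => Polynomial.monic_X_sub_C μ)
    (aeval_prod_X_sub_C_eq_zero_of_iSup_eigenspace_eq_top (hdiag.iSup_eigenspace_eq_top hS)) h
  refine le_antisymm (krylovSpace_le _ _ (mulVecLin_mem_reachSub A B) hRB _) ?_
  calc reachSub A B = krylov (A + B * F) B h := by rw [krylov_add_mul, hkry]
    _ ≤ krylov (A + B * F) B P.natDegree := by
      rw [krylov_eq_krylovSpace, krylov_eq_krylovSpace, ← transfer, ← transfer]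
      exact map_mono stable
    _ = _ := by rw [krylov_add_mul, hdeg]

lemma exists_isDiagonalizable_ncard_hasEigenvalue_le {h : ℕ}
    (hkry : krylov A B h = reachSub A B) :
    ∃ (F : Matrix (Fin m) (Fin n) ℂ)
      (hinv : ∀ x ∈ reachSub A B, (A + B * F).mulVecLin x ∈ reachSub A B),
      IsDiagonalizable ((A + B * F).mulVecLin.restrict hinv) ∧
      {μ | HasEigenvalue ((A + B * F).mulVecLin.restrict hinv) μ}.ncard ≤ h := by
  have hRB := range_mulVecLin_le_reachSub A B
  let 𝒜 := A.mulVecLin.restrict (mulVecLin_mem_reachSub A B)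
  let b := B.mulVecLin.codRestrict (reachSub A B) fun u => hRB ⟨u, rfl⟩
  let Λ : Finset ℂ := (Finset.range h).map Nat.castEmbedding
  have htop : krylovSpace 𝒜 (LinearMap.range b) (0 + Λ.card) = ⊤ := by
    rw [zero_add, Finset.card_map, Finset.card_range, LinearMap.range_codRestrict]
    apply map_injective_of_injective (reachSub A B).injective_subtype
    rw [map_subtype_krylovSpace_restrict _ _ _ hRB, map_subtype_top]
    exact hkry
  obtain ⟨g, hg⟩ := exists_iSup_eigenspace_add_comp_eq_top 𝒜 b Λ
    (by simpa using krylovSpace_sup_iSup_comap_eq_top 𝒜 _ Λ 0 htop)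
  obtain ⟨G, hG⟩ := LinearMap.exists_extend g
  let F := LinearMap.toMatrix' G
  have hinv := add_mul_mulVecLin_mem_reachSub A B F
  have hM : (A + B * F).mulVecLin.restrict hinv = 𝒜 + b ∘ₗ g := by
    ext x : 2
    simp [F, ← hG, 𝒜, b]
  refine ⟨F, hinv, ?_, ?_⟩
  · rw [IsDiagonalizable, hM, eq_top_iff, ← hg]
    exact iSup₂_le fun a _ => le_iSup (fun μ => eigenspace (𝒜 + b ∘ₗ g) μ) a
  · calc _ ≤ (Λ : Set ℂ).ncard := Set.ncard_le_ncard fun μ hμ =>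
          mem_of_hasEigenvalue_of_iSup_eigenspace_eq_top hg (hM ▸ hμ)
      _ = h := by rw [Set.ncard_coe_finset, Finset.card_map, Finset.card_range]

end ControlSystem

theorem min_krylov_steps_eq_min_distinct_eigs_general (n m : ℕ)
    (A : Matrix (Fin n) (Fin n) ℂ) (B : Matrix (Fin n) (Fin m) ℂ)
    (hB : B ≠ 0)
    (h : ℕ)
    (hmin : IsLeast {ℓ : ℕ | 1 ≤ ℓ ∧ krylov A B ℓ = reachSub A B} h) :
    IsLeast {q : ℕ | ∃ (F : Matrix (Fin m) (Fin n) ℂ)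
        (hinv : ∀ x ∈ reachSub A B, (A + B * F).mulVecLin x ∈ reachSub A B),
        IsDiagonalizable ((A + B * F).mulVecLin.restrict hinv) ∧
        {μ : ℂ | Module.End.HasEigenvalue ((A + B * F).mulVecLin.restrict hinv) μ}.ncard = q}
      h := by
  have hkry : krylov A B h = reachSub A B := hmin.1.2
  have lower : ∀ (F : Matrix (Fin m) (Fin n) ℂ)
      (hinv : ∀ x ∈ reachSub A B, (A + B * F).mulVecLin x ∈ reachSub A B),
      IsDiagonalizable ((A + B * F).mulVecLin.restrict hinv) →
      h ≤ {μ | HasEigenvalue ((A + B * F).mulVecLin.restrict hinv) μ}.ncard := by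
    intro F hinv hdiag
    have hq := krylov_ncard_hasEigenvalue_eq_reachSub A B hkry F hinv hdiag
    exact hmin.2 ⟨one_le_of_krylov_eq_reachSub A B hB hq, hq⟩
  obtain ⟨F, hinv, hdiag, hle⟩ := exists_isDiagonalizable_ncard_hasEigenvalue_le A B hkry
  refine ⟨⟨F, hinv, hdiag, le_antisymm hle (lower F hinv hdiag)⟩, ?_⟩
  rintro q ⟨F, hinv, hdiag, rfl⟩
  exact lower F hinv hdiag

theorem min_krylov_steps_eq_min_distinct_eigs (n m : ℕ) (hn : 0 < n) (hm : 0 < m)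
    (A : Matrix (Fin n) (Fin n) ℂ) (B : Matrix (Fin n) (Fin m) ℂ)
    (hB : B ≠ 0)
    (h : ℕ)
    (hmin : IsLeast {ℓ : ℕ | 1 ≤ ℓ ∧ krylov A B ℓ = reachSub A B} h) :
    IsLeast {q : ℕ | ∃ (F : Matrix (Fin m) (Fin n) ℂ)
        (hinv : ∀ x ∈ reachSub A B, (A + B * F).mulVecLin x ∈ reachSub A B),
        IsDiagonalizable ((A + B * F).mulVecLin.restrict hinv) ∧
        {μ : ℂ | Module.End.HasEigenvalue ((A + B * F).mulVecLin.restrict hinv) μ}.ncard = q}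
      h :=
  min_krylov_steps_eq_min_distinct_eigs_general n m A B hB h hmin
end

section
/- (Moore's theorem.) Let A ∈ ℝ^{n×n}, B ∈ ℝ^{n×m}, and let λ_1, …, λ_n be distinct complex numbers forming a self-conjugate set (for each i there is j with λ_j equal to the complex conjugate of λ_i). Let v_1, …, v_n ∈ ℂ^n be linearly independent over ℂ and satisfy: v_i equals the complex conjugate of v_j whenever λ_i equals the complex conjugate of λ_j. Then there exists a real matrix F ∈ ℝ^{m×n} such that (A + BF)v_i = λ_i v_i for all i ∈ {1,…,n} (with A, B, F acting on ℂ^n via their complexifications) if and only if v_i ∈ V(λ_i) for all i ∈ {1,…,n}. -/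
/-!
The forward direction is immediate: `u = F v_i` witnesses `v_i ∈ V(λ_i)`. Conversely, since the
`v_i` are linearly independent, the witnesses `u_i` are the images `M v_i` of a single complex
matrix `M`, so `K := A + B M` has the eigenpairs `(λ_i, v_i)`. The eigenpairs are closed under
conjugation, so the entrywise conjugate of `K` has the same eigenpairs, and hence so does their
average `Re K = A + B (Re M)`; thus `F := Re M` works.
-/

open Matrix Submodule

/-- The pencil subspace `V(λ)`: projection onto the first `n` coordinates of the
kernel of `[A - λI, B]`, i.e. `{x | ∃ u, (A - λI) x + B u = 0}`. -/
noncomputable def pencilSub {n m : ℕ} (A : Matrix (Fin n) (Fin n) ℂ)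
    (B : Matrix (Fin n) (Fin m) ℂ) (lam : ℂ) : Submodule ℂ (Fin n → ℂ) :=
  Submodule.map (LinearMap.fst ℂ (Fin n → ℂ) (Fin m → ℂ))
    (LinearMap.ker (((A - lam • 1).mulVecLin).coprod B.mulVecLin))

theorem mem_pencilSub_iff {n m : ℕ} {A : Matrix (Fin n) (Fin n) ℂ}
    {B : Matrix (Fin n) (Fin m) ℂ} {lam : ℂ} {x : Fin n → ℂ} :
    x ∈ pencilSub A B lam ↔ ∃ u : Fin m → ℂ, A *ᵥ x + B *ᵥ u = lam • x := by
  simp only [pencilSub, mem_map, LinearMap.mem_ker, LinearMap.coprod_apply, mulVecLin_apply,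
    sub_mulVec, smul_mulVec, one_mulVec, LinearMap.fst_apply, Prod.exists, exists_and_right,
    exists_eq_right]
  refine exists_congr fun u => ?_
  constructor <;> intro h <;> linear_combination (norm := module) h

theorem LinearIndependent.exists_linearMap_apply_eq {K V W ι : Type*} [Field K]
    [AddCommGroup V] [Module K V] [AddCommGroup W] [Module K W] {v : ι → V}
    (hv : LinearIndependent K v) (u : ι → W) : ∃ f : V →ₗ[K] W, ∀ i, f (v i) = u i := by
  obtain ⟨g, hg⟩ := (Finsupp.linearCombination K v).exists_leftInverse_of_injective
    (LinearMap.ker_eq_bot.mpr hv)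
  refine ⟨Finsupp.linearCombination K u ∘ₗ g, fun i => ?_⟩
  have hgv : g (v i) = Finsupp.single i 1 := by
    simpa using LinearMap.congr_fun hg (Finsupp.single i 1)
  simp [hgv]

theorem LinearIndependent.exists_matrix_mulVec_eq {K ι m n : Type*} [Field K] [Fintype n]
    [DecidableEq n] {v : ι → n → K} (hv : LinearIndependent K v) (u : ι → m → K) :
    ∃ M : Matrix m n K, ∀ i, M *ᵥ v i = u i := by
  obtain ⟨f, hf⟩ := hv.exists_linearMap_apply_eq u
  exact ⟨LinearMap.toMatrix' f, fun i => by rw [LinearMap.toMatrix'_mulVec, hf]⟩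

namespace Matrix

variable {m n : Type*} [Fintype n]

theorem map_conj_mulVec_star (K : Matrix m n ℂ) (x : n → ℂ) :
    K.map (starRingEnd ℂ) *ᵥ star x = star (K *ᵥ x) :=
  funext fun i => ((starRingEnd ℂ).map_mulVec K x i).symm

theorem map_re_map_ofReal_mulVec (K : Matrix m n ℂ) (x : n → ℂ) :
    (K.map Complex.re).map Complex.ofReal *ᵥ x
      = (2 : ℂ)⁻¹ • (K *ᵥ x + K.map (starRingEnd ℂ) *ᵥ x) := by
  have hre : (K.map Complex.re).map Complex.ofReal = (2 : ℂ)⁻¹ • (K + K.map (starRingEnd ℂ)) := by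
    ext i j
    simp only [map_apply, Complex.re_eq_add_conj, smul_apply, add_apply, smul_eq_mul]
    ring
  rw [hre, smul_mulVec, add_mulVec]

theorem map_re_map_ofReal_mulVec_eq_smul {K : Matrix n n ℂ} {x : n → ℂ} {μ : ℂ}
    (hx : K *ᵥ x = μ • x) (hx_star : K *ᵥ star x = starRingEnd ℂ μ • star x) :
    (K.map Complex.re).map Complex.ofReal *ᵥ x = μ • x := by
  have hconj : K.map (starRingEnd ℂ) *ᵥ x = μ • x := by
    simpa [hx_star] using K.map_conj_mulVec_star (star x)
  rw [map_re_map_ofReal_mulVec, hx, hconj]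
  module

theorem ofReal_add_ofReal_mul_map_re [Fintype m] (A : Matrix m m ℝ) (B : Matrix m n ℝ)
    (M : Matrix n m ℂ) :
    A.map Complex.ofReal + B.map Complex.ofReal * (M.map Complex.re).map Complex.ofReal
      = ((A.map Complex.ofReal + B.map Complex.ofReal * M).map Complex.re).map Complex.ofReal := by
  ext i j
  simp [mul_apply, Complex.re_sum]

end Matrix

theorem moore_theorem_general (n m : ℕ)
    (A : Matrix (Fin n) (Fin n) ℝ) (B : Matrix (Fin n) (Fin m) ℝ)
    (lam : Fin n → ℂ)
    (hsc : ∀ i, ∃ j, lam j = (starRingEnd ℂ) (lam i))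
    (v : Fin n → (Fin n → ℂ)) (hli : LinearIndependent ℂ v)
    (hconj : ∀ i j, lam i = (starRingEnd ℂ) (lam j) →
      v i = fun k => (starRingEnd ℂ) (v j k)) :
    (∃ F : Matrix (Fin m) (Fin n) ℝ,
      ∀ i, (A.map Complex.ofReal + B.map Complex.ofReal * F.map Complex.ofReal).mulVecLin
          (v i) = lam i • v i)
    ↔ ∀ i, v i ∈ pencilSub (A.map Complex.ofReal) (B.map Complex.ofReal) (lam i) := by
  simp only [mulVecLin_apply, mem_pencilSub_iff]
  constructor
  · rintro ⟨F, hF⟩ i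
    exact ⟨F.map Complex.ofReal *ᵥ v i, by rw [← hF i, add_mulVec, mulVec_mulVec]⟩
  · intro hmem
    choose u hu using hmem
    obtain ⟨M, hM⟩ := hli.exists_matrix_mulVec_eq u
    set K := A.map Complex.ofReal + B.map Complex.ofReal * M
    have hK : ∀ i, K *ᵥ v i = lam i • v i := fun i => by
      rw [add_mulVec, ← mulVec_mulVec, hM, hu]
    have hK_star : ∀ i, K *ᵥ star (v i) = starRingEnd ℂ (lam i) • star (v i) := fun i => by
      obtain ⟨j, hj⟩ := hsc i
      have hvj : v j = star (v i) := hconj j i hj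
      rw [← hvj, ← hj, hK]
    refine ⟨M.map Complex.re, fun i => ?_⟩
    rw [ofReal_add_ofReal_mul_map_re]
    exact map_re_map_ofReal_mulVec_eq_smul (hK i) (hK_star i)

/-- Moore's theorem. -/
theorem moore_theorem (n m : ℕ) (hn : 0 < n) (hm : 0 < m)
    (A : Matrix (Fin n) (Fin n) ℝ) (B : Matrix (Fin n) (Fin m) ℝ)
    (lam : Fin n → ℂ) (hdist : Function.Injective lam)
    (hsc : ∀ i, ∃ j, lam j = (starRingEnd ℂ) (lam i))
    (v : Fin n → (Fin n → ℂ)) (hli : LinearIndependent ℂ v)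
    (hconj : ∀ i j, lam i = (starRingEnd ℂ) (lam j) →
      v i = fun k => (starRingEnd ℂ) (v j k)) :
    (∃ F : Matrix (Fin m) (Fin n) ℝ,
      ∀ i, (A.map Complex.ofReal + B.map Complex.ofReal * F.map Complex.ofReal).mulVecLin
          (v i) = lam i • v i)
    ↔ ∀ i, v i ∈ pencilSub (A.map Complex.ofReal) (B.map Complex.ofReal) (lam i) :=
  moore_theorem_general n m A B lam hsc v hli hconj
end
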